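/- It holds that Z·(I − A_R)·Zᵀ·(Z·β_R) = Z·(I − A_R)·β_ll, and consequently, for every real α, Z·β_R = Z·(I − α·R·(I − A_R))·Zᵀ·(Z·β_R) + α·R·Z·(I − A_R)·β_ll (the large-R fixed-point equation (10) used in the modified iterative algorithm). -/

import Mathlib

open Matrix

/-!
Write `B = S + R•I`, so that `I - A_R = B⁻¹ S` and the penalized matrix is `M = B - R•ZᵀZ`.
Idempotence of `ZZᵀ` forces `ZZᵀZ = Z`, hence `Z (I - A_R) ZᵀZ = Z B⁻¹ M`. Applied to `β_R`,
where `M β_R = S β_ll`, this gives `Z (I - A_R) Zᵀ (Z β_R) = Z B⁻¹ S β_ll = Z (I - A_R) β_ll`.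
The `α`-form is a rearrangement of this identity, using `ZZᵀ (Z β_R) = Z β_R` once more.
-/

namespace Matrix

variable {m n R : Type*} [Fintype n]

theorem mul_conjTranspose_mul_self_of_isIdempotentElem [Fintype m] [Ring R] [PartialOrder R]
    [StarRing R] [StarOrderedRing R] [NoZeroDivisors R] {Z : Matrix m n R}
    (h : IsIdempotentElem (Z * Zᴴ)) : Z * Zᴴ * Z = Z := by
  have hP : Z * Zᴴ * Z * Zᴴ = Z * Zᴴ := by rw [Matrix.mul_assoc (Z * Zᴴ)]; exact h
  -- `(Z Zᴴ Z - Z)(Z Zᴴ Z - Z)ᴴ = P³ - 2P² + P` with `P = Z Zᴴ` idempotent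
  have hzero : (Z * Zᴴ * Z - Z) * (Z * Zᴴ * Z - Z)ᴴ = 0 := by
    simp only [conjTranspose_sub, conjTranspose_mul, conjTranspose_conjTranspose, Matrix.sub_mul,
      Matrix.mul_sub, ← Matrix.mul_assoc, hP]
    abel
  exact sub_eq_zero.mp (self_mul_conjTranspose_eq_zero.mp hzero)

theorem one_sub_smul_inv_add_smul_one [DecidableEq n] [CommRing R] {S : Matrix n n R} {r : R}
    (h : IsUnit (S + r • 1).det) : 1 - r • (S + r • 1)⁻¹ = (S + r • 1)⁻¹ * S := by
  calc 1 - r • (S + r • 1)⁻¹ = (S + r • 1)⁻¹ * (S + r • 1) - (S + r • 1)⁻¹ * (r • 1) := by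
        rw [nonsing_inv_mul _ h, Matrix.mul_smul, Matrix.mul_one]
    _ = (S + r • 1)⁻¹ * S := by rw [← Matrix.mul_sub, add_sub_cancel_right]

theorem mul_one_sub_smul_mul_eq_mul_mul_sub_smul [DecidableEq n] [CommRing R]
    {Z : Matrix m n R} {B C P : Matrix n n R} (hCB : C * B = 1) (hZP : Z * P = Z) (r : R) :
    Z * (1 - r • C) * P = Z * C * (B - r • P) := by
  simp only [Matrix.mul_sub, Matrix.sub_mul, Matrix.mul_smul, Matrix.smul_mul, Matrix.mul_one,
    Matrix.mul_assoc, hCB, hZP]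

theorem mulVec_eq_one_sub_smul_mul_transpose_mulVec_add_smul [Fintype m] [DecidableEq n]
    [CommRing R]
    {Z : Matrix m n R} (hZ : Z * Zᵀ * Z = Z) {T : Matrix n n R} {β : n → R} {w : m → R}
    (h : (Z * T * Zᵀ) *ᵥ (Z *ᵥ β) = w) (c : R) :
    Z *ᵥ β = (Z * (1 - c • T) * Zᵀ) *ᵥ (Z *ᵥ β) + c • w := by
  rw [Matrix.mul_sub, Matrix.sub_mul, Matrix.mul_one, Matrix.mul_smul, Matrix.smul_mul,
    sub_mulVec, smul_mulVec, h, mulVec_mulVec, hZ, sub_add_cancel]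

end Matrix

theorem largeR_fixed_point_equation_general
    {N q : ℕ}
    (S : Matrix (Fin N) (Fin N) ℝ)
    (R : ℝ)
    (Z : Matrix (Fin q) (Fin N) ℝ)
    (hZ2 : (Z * Zᵀ) * (Z * Zᵀ) = Z * Zᵀ)
    (hSR : (S + R • (1 : Matrix (Fin N) (Fin N) ℝ)).PosDef)
    (A : Matrix (Fin N) (Fin N) ℝ)
    (hA : A = R • (S + R • (1 : Matrix (Fin N) (Fin N) ℝ))⁻¹)
    (hpen : (S + R • ((1 : Matrix (Fin N) (Fin N) ℝ) - Zᵀ * Z)).PosDef)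
    (βll : Fin N → ℝ) (βR : Fin N → ℝ)
    (hβR : βR = ((S + R • ((1 : Matrix (Fin N) (Fin N) ℝ) - Zᵀ * Z))⁻¹ * S).mulVec βll) :
    (Z * ((1 : Matrix (Fin N) (Fin N) ℝ) - A) * Zᵀ).mulVec (Z.mulVec βR) =
        (Z * ((1 : Matrix (Fin N) (Fin N) ℝ) - A)).mulVec βll ∧
      ∀ α : ℝ,
        Z.mulVec βR =
          (Z * ((1 : Matrix (Fin N) (Fin N) ℝ) -
              (α * R) • ((1 : Matrix (Fin N) (Fin N) ℝ) - A)) * Zᵀ).mulVec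
            (Z.mulVec βR) +
            (α * R) • (Z * ((1 : Matrix (Fin N) (Fin N) ℝ) - A)).mulVec βll := by
  set B := S + R • (1 : Matrix (Fin N) (Fin N) ℝ)
  set M := S + R • ((1 : Matrix (Fin N) (Fin N) ℝ) - Zᵀ * Z)
  have hB : IsUnit B.det := hSR.det_pos.ne'.isUnit
  have hZZZ : Z * Zᵀ * Z = Z := by
    have hidem : IsIdempotentElem (Z * Zᴴ) := by
      rw [conjTranspose_eq_transpose_of_trivial]; exact hZ2
    simpa using mul_conjTranspose_mul_self_of_isIdempotentElem hidem
  have hMβ : M *ᵥ βR = S *ᵥ βll := by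
    rw [hβR, mulVec_mulVec, ← Matrix.mul_assoc, mul_nonsing_inv M hpen.det_pos.ne'.isUnit,
      Matrix.one_mul]
  have hM : M = B - R • (Zᵀ * Z) := by
    rw [show M = S + R • (1 - Zᵀ * Z) from rfl, smul_sub, add_sub_assoc]
  have hnormal : (Z * (1 - A) * Zᵀ) *ᵥ (Z *ᵥ βR) = (Z * (1 - A)) *ᵥ βll := by
    calc (Z * (1 - A) * Zᵀ) *ᵥ (Z *ᵥ βR) = (Z * (1 - A) * (Zᵀ * Z)) *ᵥ βR := by
          rw [mulVec_mulVec, Matrix.mul_assoc _ Zᵀ Z]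
      _ = (Z * B⁻¹) *ᵥ (M *ᵥ βR) := by
          rw [hA, mul_one_sub_smul_mul_eq_mul_mul_sub_smul (nonsing_inv_mul B hB)
            (by rw [← Matrix.mul_assoc, hZZZ]), ← hM, mulVec_mulVec]
      _ = (Z * (1 - A)) *ᵥ βll := by
          rw [hMβ, mulVec_mulVec, hA, one_sub_smul_inv_add_smul_one hB, Matrix.mul_assoc]
  exact ⟨hnormal, fun α =>
    mulVec_eq_one_sub_smul_mul_transpose_mulVec_add_smul hZZZ hnormal (α * R)⟩

/-- the large-`R` fixed-point equation (10):
`Z·(I − A_R)·Zᵀ·(Z·β_R) = Z·(I − A_R)·β_ll`, and consequently for every real `α`,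
`Z·β_R = Z·(I − α·R·(I − A_R))·Zᵀ·(Z·β_R) + α·R·Z·(I − A_R)·β_ll`. -/
theorem largeR_fixed_point_equation
    {N q : ℕ} (hN : 0 < N) (hq : 0 < q)
    (S : Matrix (Fin N) (Fin N) ℝ) (hS : S.PosSemidef)
    (R : ℝ) (hR : 0 < R)
    (Z : Matrix (Fin q) (Fin N) ℝ)
    (hZ1 : (Zᵀ * Z) * (Zᵀ * Z) = Zᵀ * Z)
    (hZ2 : (Z * Zᵀ) * (Z * Zᵀ) = Z * Zᵀ)
    (hSR : (S + R • (1 : Matrix (Fin N) (Fin N) ℝ)).PosDef)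
    (A : Matrix (Fin N) (Fin N) ℝ)
    (hA : A = R • (S + R • (1 : Matrix (Fin N) (Fin N) ℝ))⁻¹)
    (hpen : (S + R • ((1 : Matrix (Fin N) (Fin N) ℝ) - Zᵀ * Z)).PosDef)
    (βll : Fin N → ℝ) (βR : Fin N → ℝ)
    (hβR : βR = ((S + R • ((1 : Matrix (Fin N) (Fin N) ℝ) - Zᵀ * Z))⁻¹ * S).mulVec βll) :
    (Z * ((1 : Matrix (Fin N) (Fin N) ℝ) - A) * Zᵀ).mulVec (Z.mulVec βR) =
        (Z * ((1 : Matrix (Fin N) (Fin N) ℝ) - A)).mulVec βll ∧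
      ∀ α : ℝ,
        Z.mulVec βR =
          (Z * ((1 : Matrix (Fin N) (Fin N) ℝ) -
              (α * R) • ((1 : Matrix (Fin N) (Fin N) ℝ) - A)) * Zᵀ).mulVec
            (Z.mulVec βR) +
            (α * R) • (Z * ((1 : Matrix (Fin N) (Fin N) ℝ) - A)).mulVec βll :=
  largeR_fixed_point_equation_general S R Z hZ2 hSR A hA hpen βll βR hβR
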